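/- Suppose additionally a is a gradient field with potential φ, and f = c e^{φ} + h for some c ∈ ℝ and h ∈ ℓ²(V). Then for each k ≥ 1, ‖g_k‖ ≤ √t (1 − e^{−tλ_max})^{(k−1)/2} ‖M_{√w} D_a h‖. -/

import Mathlib

open Matrix Real MeasureTheory ProbabilityTheory

variable {V : Type*} [Fintype V] [DecidableEq V]

/-- The difference operator `(D_a f)(i,j) = f j - e^{a(i,j)} f i`, as a matrix from
`ℓ²(V)` to `ℓ²(E)`. -/
noncomputable def Dmat (E : Finset (V × V)) (a : V × V → ℝ) : Matrix E V ℝ :=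
  fun e v => (if v = (e : V × V).2 then (1 : ℝ) else 0) -
    Real.exp (a e) * (if v = (e : V × V).1 then (1 : ℝ) else 0)

/-- The Laplacian `Δ_{w,a} = D_a^* M_w D_a` associated with the quadratic form
`Q_{w,a}(f) = Σ_{(i,j)∈E} w(i,j) |e^{a(i,j)} f i − f j|²`. -/
noncomputable def Lap (E : Finset (V × V)) (w a : V × V → ℝ) : Matrix V V ℝ :=
  (Dmat E a)ᵀ * Matrix.diagonal (fun e : E => w e) * Dmat E a

/-- Weak connectivity of a directed graph: any two vertices are joined by a chain of
edges ignoring orientation. -/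
def WeaklyConnected (E : Finset (V × V)) : Prop :=
  ∀ u v : V, Relation.ReflTransGen (fun x y => (x, y) ∈ E ∨ (y, x) ∈ E) u v

/-!
Put `T = 1 - exp (-t Δ) = S * S`. By the functional calculus, `T ≤ t Δ` (from `1 - e^{-s} ≤ s`)
and `T ≤ β` with `β = 1 - e^{-t λmax}`, since the spectrum of `Δ` lies in `[0, λmax]`. As
`‖S x‖² = ⟨x, T x⟩` and `|·|` preserves norms, each scattering step shrinks `‖g‖²` by `β`, so
`‖g_k‖² ≤ β^{k-1} ‖g_1‖²`. For the first step, `‖g_1‖² ≤ t ⟨|f|, Δ |f|⟩ ≤ t ⟨f, Δ f⟩`, because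
taking absolute values does not increase any `|f j - e^{a(i,j)} f i|`; finally
`⟨f, Δ f⟩ = ‖M_{√w} D_a h‖²` because `D_a` kills `e^φ`.
-/

open scoped MatrixOrder

namespace Matrix

variable {n : Type*} [Fintype n]

theorem dotProduct_mulVec_le_of_le {A B : Matrix n n ℝ} (h : A ≤ B) (x : n → ℝ) :
    x ⬝ᵥ A *ᵥ x ≤ x ⬝ᵥ B *ᵥ x := by
  have := (le_iff.mp h).dotProduct_mulVec_nonneg x
  rwa [star_trivial, sub_mulVec, dotProduct_sub, sub_nonneg] at this

theorem IsHermitian.mulVec_dotProduct_mulVec {S : Matrix n n ℝ} (hS : S.IsHermitian)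
    (x : n → ℝ) :
    S *ᵥ x ⬝ᵥ S *ᵥ x = x ⬝ᵥ (S * S) *ᵥ x := by
  rw [← mulVec_mulVec, dotProduct_mulVec, ← mulVec_transpose,
    ← conjTranspose_eq_transpose_of_trivial, hS.eq, dotProduct_comm]

variable [DecidableEq n]

theorem mem_spectrum_iff_exists_mulVec_eq_smul {K : Type*} [Field K] {A : Matrix n n K}
    {μ : K} :
    μ ∈ spectrum K A ↔ ∃ v, v ≠ 0 ∧ A *ᵥ v = μ • v := by
  simp only [← spectrum_toLin', ← Module.End.hasEigenvalue_iff_mem_spectrum,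
    Module.End.hasEigenvalue_iff, Submodule.ne_bot_iff, Module.End.mem_eigenspace_iff,
    toLin'_apply]
  exact ⟨fun ⟨v, hv, hv0⟩ => ⟨v, hv0, hv⟩, fun ⟨v, hv0, hv⟩ => ⟨v, hv, hv0⟩⟩

variable {A : Matrix n n ℝ}

theorem IsHermitian.exp_neg_smul_eq_cfc (hA : A.IsHermitian) (t : ℝ) :
    NormedSpace.exp ((-t) • A) = cfc (fun x => Real.exp (-t * x)) A := by
  rw [cfc_comp_const_mul (-t) Real.exp A (ha := hA.isSelfAdjoint)]
  -- `exp` only sees the topology, so any norm inducing it lets us use the normed CFC identity.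
  exact (@CFC.real_exp_eq_normedSpace_exp _ Matrix.linftyOpNormedRing _
    Matrix.linftyOpNormedAlgebra IsHermitian.instContinuousFunctionalCalculus _
      ((IsSelfAdjoint.all (-t)).smul hA.isSelfAdjoint)).symm

theorem IsHermitian.one_sub_exp_neg_smul_eq_cfc (hA : A.IsHermitian) (t : ℝ) :
    1 - NormedSpace.exp ((-t) • A) = cfc (fun x => 1 - Real.exp (-t * x)) A := by
  rw [cfc_sub (fun _ => 1) _ A, cfc_const_one ℝ A hA.isSelfAdjoint, hA.exp_neg_smul_eq_cfc]

theorem IsHermitian.one_sub_exp_neg_smul_le_smul (hA : A.IsHermitian) (t : ℝ) :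
    1 - NormedSpace.exp ((-t) • A) ≤ t • A := by
  rw [hA.one_sub_exp_neg_smul_eq_cfc, ← cfc_const_mul_id t A hA.isSelfAdjoint]
  exact cfc_mono fun x _ => by linarith [Real.add_one_le_exp (-t * x)]

theorem IsHermitian.one_sub_exp_neg_smul_le_of_spectrum_le (hA : A.IsHermitian) {t lmax : ℝ}
    (ht : 0 ≤ t) (hmax : ∀ x ∈ spectrum ℝ A, x ≤ lmax) :
    1 - NormedSpace.exp ((-t) • A) ≤ (1 - Real.exp (-(t * lmax))) • 1 := by
  rw [hA.one_sub_exp_neg_smul_eq_cfc, ← Algebra.algebraMap_eq_smul_one,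
    ← cfc_const _ A hA.isSelfAdjoint]
  refine cfc_mono fun x hx => ?_
  have := Real.exp_le_exp.mpr (show -(t * lmax) ≤ -t * x by nlinarith [hmax x hx])
  linarith

variable {S : Matrix n n ℝ} {t : ℝ}

theorem IsHermitian.mulVec_dotProduct_mulVec_le_smul (hS : S.IsHermitian)
    (hA : A.IsHermitian) (hSsq : S * S = 1 - NormedSpace.exp ((-t) • A)) (x : n → ℝ) :
    S *ᵥ x ⬝ᵥ S *ᵥ x ≤ t * (x ⬝ᵥ A *ᵥ x) := by
  rw [hS.mulVec_dotProduct_mulVec, hSsq, ← smul_eq_mul, ← dotProduct_smul, ← smul_mulVec]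
  exact dotProduct_mulVec_le_of_le (hA.one_sub_exp_neg_smul_le_smul t) x

theorem IsHermitian.mulVec_dotProduct_mulVec_le_of_spectrum_le (hS : S.IsHermitian)
    (hA : A.IsHermitian) (hSsq : S * S = 1 - NormedSpace.exp ((-t) • A)) (ht : 0 ≤ t) {lmax : ℝ}
    (hmax : ∀ x ∈ spectrum ℝ A, x ≤ lmax) (x : n → ℝ) :
    S *ᵥ x ⬝ᵥ S *ᵥ x ≤ (1 - Real.exp (-(t * lmax))) * (x ⬝ᵥ x) := by
  rw [hS.mulVec_dotProduct_mulVec, hSsq]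
  refine (dotProduct_mulVec_le_of_le
    (hA.one_sub_exp_neg_smul_le_of_spectrum_le ht hmax) x).trans_eq ?_
  rw [smul_mulVec, one_mulVec, dotProduct_smul, smul_eq_mul]

end Matrix

theorem Real.rpow_natCast_succ_sub_one_div_two {β : ℝ} (hβ : 0 ≤ β) (m : ℕ) :
    β ^ ((((m + 1 : ℕ) : ℝ) - 1) / 2) = √(β ^ m) := by
  rw [Nat.cast_succ, add_sub_cancel_right, div_eq_mul_one_div, Real.rpow_mul hβ,
    Real.rpow_natCast, Real.sqrt_eq_rpow]

theorem dotProduct_self_abs {n : Type*} [Fintype n] (x : n → ℝ) :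
    (fun i => |x i|) ⬝ᵥ (fun i => |x i|) = x ⬝ᵥ x := by
  simp only [dotProduct, abs_mul_abs_self]

theorem dotProduct_iterate_abs_le {n : Type*} [Fintype n] {S : Matrix n n ℝ} {β : ℝ}
    (hβ : 0 ≤ β) (hS : ∀ x, S *ᵥ x ⬝ᵥ S *ᵥ x ≤ β * (x ⬝ᵥ x)) {g : ℕ → n → ℝ}
    (hg : ∀ k, g (k + 1) = S *ᵥ fun i => |g k i|) (m : ℕ) :
    g (m + 1) ⬝ᵥ g (m + 1) ≤ β ^ m * (g 1 ⬝ᵥ g 1) := by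
  induction m with
  | zero => simp
  | succ m ih =>
    calc g (m + 2) ⬝ᵥ g (m + 2) ≤ β * (g (m + 1) ⬝ᵥ g (m + 1)) := by
          rw [hg (m + 1), ← dotProduct_self_abs (g (m + 1))]; exact hS _
      _ ≤ β * (β ^ m * (g 1 ⬝ᵥ g 1)) := mul_le_mul_of_nonneg_left ih hβ
      _ = β ^ (m + 1) * (g 1 ⬝ᵥ g 1) := by ring

theorem Dmat_mulVec_apply (E : Finset (V × V)) (a : V × V → ℝ) (x : V → ℝ) (e : E) :
    (Dmat E a *ᵥ x) e = x (e : V × V).2 - Real.exp (a e) * x (e : V × V).1 := by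
  simp [Dmat, mulVec, dotProduct, sub_mul, Finset.sum_sub_distrib]

theorem Dmat_mulVec_exp_eq_zero {E : Finset (V × V)} {a : V × V → ℝ} {φ : V → ℝ}
    (hgrad : ∀ e ∈ E, a e = φ e.2 - φ e.1) : Dmat E a *ᵥ (fun i => Real.exp (φ i)) = 0 := by
  ext e
  rw [Dmat_mulVec_apply, hgrad e e.2, ← Real.exp_add, sub_add_cancel, sub_self, Pi.zero_apply]

theorem Dmat_mulVec_smul_exp_add {E : Finset (V × V)} {a : V × V → ℝ} {φ : V → ℝ}
    (hgrad : ∀ e ∈ E, a e = φ e.2 - φ e.1) (c : ℝ) (h : V → ℝ) :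
    Dmat E a *ᵥ (fun i => c * Real.exp (φ i) + h i) = Dmat E a *ᵥ h := by
  change Dmat E a *ᵥ (c • (fun i => Real.exp (φ i)) + h) = _
  rw [mulVec_add, mulVec_smul, Dmat_mulVec_exp_eq_zero hgrad, smul_zero, zero_add]

theorem sq_Dmat_mulVec_abs_le (E : Finset (V × V)) (a : V × V → ℝ) (x : V → ℝ) (e : E) :
    (Dmat E a *ᵥ fun i => |x i|) e ^ 2 ≤ (Dmat E a *ᵥ x) e ^ 2 := by
  rw [Dmat_mulVec_apply, Dmat_mulVec_apply, sq_le_sq]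
  simpa only [abs_mul, Real.abs_exp] using
    abs_abs_sub_abs_le_abs_sub (x (e : V × V).2) (Real.exp (a e) * x (e : V × V).1)

theorem dotProduct_Lap_mulVec (E : Finset (V × V)) (w a : V × V → ℝ) (x : V → ℝ) :
    x ⬝ᵥ Lap E w a *ᵥ x = ∑ e : E, w e * (Dmat E a *ᵥ x) e ^ 2 := by
  rw [Lap, ← mulVec_mulVec, ← mulVec_mulVec, dotProduct_mulVec, vecMul_transpose]
  simp only [dotProduct, mulVec_diagonal]
  exact Finset.sum_congr rfl fun e _ => by ring

theorem Lap_posSemidef (E : Finset (V × V)) {w : V × V → ℝ} (a : V × V → ℝ)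
    (hw : ∀ e ∈ E, 0 ≤ w e) : (Lap E w a).PosSemidef := by
  simpa [Lap, conjTranspose_eq_transpose_of_trivial] using
    (posSemidef_diagonal_iff.mpr fun e : E => hw e e.2).conjTranspose_mul_mul_same (Dmat E a)

theorem dotProduct_Lap_mulVec_abs_le (E : Finset (V × V)) {w : V × V → ℝ} (a : V × V → ℝ)
    (hw : ∀ e ∈ E, 0 ≤ w e) (x : V → ℝ) :
    (fun i => |x i|) ⬝ᵥ Lap E w a *ᵥ (fun i => |x i|) ≤ x ⬝ᵥ Lap E w a *ᵥ x := by
  simp only [dotProduct_Lap_mulVec]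
  exact Finset.sum_le_sum fun e _ =>
    mul_le_mul_of_nonneg_left (sq_Dmat_mulVec_abs_le E a x e) (hw e e.2)

theorem stmt_12_general (E : Finset (V × V)) (w a : V × V → ℝ) (φ : V → ℝ)
    (hw : ∀ e ∈ E, 0 < w e)
    (hgrad : ∀ e ∈ E, a e = φ e.2 - φ e.1)
    (t : ℝ) (ht : 0 < t) (lmax : ℝ)
    (hlmax : IsGreatest {μ : ℝ | ∃ f : V → ℝ, f ≠ 0 ∧
      (Lap E w a).mulVec f = μ • f} lmax)
    (S : Matrix V V ℝ) (hS : S.PosSemidef)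
    (hSsq : S * S = 1 - NormedSpace.exp ((-t) • Lap E w a))
    (c : ℝ) (h f : V → ℝ) (hf : f = fun i => c * Real.exp (φ i) + h i)
    (g : ℕ → V → ℝ) (hg0 : g 0 = f)
    (hg : ∀ k, g (k + 1) = S.mulVec (fun i => |g k i|))
    (k : ℕ) (hk : 1 ≤ k) :
    Real.sqrt (∑ i, (g k i) ^ 2) ≤
      Real.sqrt t * (1 - Real.exp (-(t * lmax))) ^ (((k : ℝ) - 1) / 2) *
        Real.sqrt (∑ e : E, w e * ((Dmat E a).mulVec h e) ^ 2) := by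
  set L := Lap E w a
  have hw' : ∀ e ∈ E, 0 ≤ w e := fun e he => (hw e he).le
  have hL : L.PosSemidef := Lap_posSemidef E a hw'
  have hmax : IsGreatest (spectrum ℝ L) lmax := by
    simpa only [← mem_spectrum_iff_exists_mulVec_eq_smul, Set.ofPred_mem_eq] using hlmax
  set β := 1 - Real.exp (-(t * lmax))
  have hβ : 0 ≤ β := sub_nonneg.mpr <| Real.exp_le_one_iff.mpr <| neg_nonpos.mpr <|
    mul_nonneg ht.le (spectrum_nonneg_of_nonneg hL.nonneg hmax.1)
  have hfirst : g 1 ⬝ᵥ g 1 ≤ t * (h ⬝ᵥ L *ᵥ h) := calc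
    g 1 ⬝ᵥ g 1 ≤ t * ((fun i => |f i|) ⬝ᵥ L *ᵥ (fun i => |f i|)) := by
      rw [hg 0, hg0]; exact hS.1.mulVec_dotProduct_mulVec_le_smul hL.1 hSsq _
    _ ≤ t * (f ⬝ᵥ L *ᵥ f) :=
      mul_le_mul_of_nonneg_left (dotProduct_Lap_mulVec_abs_le E a hw' f) ht.le
    _ = t * (h ⬝ᵥ L *ᵥ h) := by
      rw [dotProduct_Lap_mulVec, dotProduct_Lap_mulVec, hf, Dmat_mulVec_smul_exp_add hgrad]
  obtain ⟨m, rfl⟩ := Nat.exists_eq_add_of_le' hk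
  have hbound := (dotProduct_iterate_abs_le hβ
    (hS.1.mulVec_dotProduct_mulVec_le_of_spectrum_le hL.1 hSsq ht.le hmax.2) hg m).trans
    (mul_le_mul_of_nonneg_left hfirst (pow_nonneg hβ m))
  have hsum : ∑ i, g (m + 1) i ^ 2 = g (m + 1) ⬝ᵥ g (m + 1) := by simp only [dotProduct, sq]
  rw [← dotProduct_Lap_mulVec, hsum, Real.rpow_natCast_succ_sub_one_div_two hβ,
    ← Real.sqrt_mul ht.le, ← Real.sqrt_mul (mul_nonneg ht.le (pow_nonneg hβ m))]
  exact Real.sqrt_le_sqrt (hbound.trans_eq (by ring))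

/-- if `a` is a gradient field with potential `φ` and `f = c e^{φ} + h`, then
`‖g_k‖ ≤ √t (1-e^{-tλmax})^{(k-1)/2} ‖M_{√w} D_a h‖`. -/
theorem stmt_12 (E : Finset (V × V)) (w a : V × V → ℝ) (φ : V → ℝ)
    (hconn : WeaklyConnected E) (hw : ∀ e ∈ E, 0 < w e)
    (hgrad : ∀ e ∈ E, a e = φ e.2 - φ e.1)
    (t : ℝ) (ht : 0 < t) (lmax : ℝ)
    (hlmax : IsGreatest {μ : ℝ | ∃ f : V → ℝ, f ≠ 0 ∧
      (Lap E w a).mulVec f = μ • f} lmax)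
    (S : Matrix V V ℝ) (hS : S.PosSemidef)
    (hSsq : S * S = 1 - NormedSpace.exp ((-t) • Lap E w a))
    (c : ℝ) (h f : V → ℝ) (hf : f = fun i => c * Real.exp (φ i) + h i)
    (g : ℕ → V → ℝ) (hg0 : g 0 = f)
    (hg : ∀ k, g (k + 1) = S.mulVec (fun i => |g k i|))
    (k : ℕ) (hk : 1 ≤ k) :
    Real.sqrt (∑ i, (g k i) ^ 2) ≤
      Real.sqrt t * (1 - Real.exp (-(t * lmax))) ^ (((k : ℝ) - 1) / 2) *
        Real.sqrt (∑ e : E, w e * ((Dmat E a).mulVec h e) ^ 2) :=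
  stmt_12_general E w a φ hw hgrad t ht lmax hlmax S hS hSsq c h f hf g hg0 hg k hk
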